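/- arXiv:2310.17712 — 5 statements merged into one kernel-verified Lean document; each statement's English description precedes it below -/
import Mathlib

section
/- Let σ(x) = 1/(1+e^{-x}) be the sigmoid function, and let α, γ, s > 0 and β ∈ ℝ. Then there exists a unique y ∈ ℝ solving α·σ(y) = β + γ·σ(-y/s) if and only if β < α and β + γ > 0. Moreover, when a solution exists, y > 0 if and only if β + γ/2 > α/2. -/
/-!
Writing the equation as `f y = β` with `f y = α σ(y) - γ σ(-y/s)`, the function `f` is continuous
and strictly increasing (both terms increase in `y`), with limits `-γ` at `-∞` and `α` at `+∞`.
Hence its range is `(-γ, α)` and each value is taken exactly once; the sign of the solution is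
read off by comparing `β` with `f 0 = (α - γ) / 2`.
-/

noncomputable def sigmoid (x : ℝ) : ℝ := (1 + Real.exp (-x))⁻¹

open Filter Set Topology

theorem sigmoid_eq_real_sigmoid : sigmoid = Real.sigmoid := rfl

theorem StrictMono.range_eq_Ioo_of_tendsto {X α : Type*} [LinearOrder X] [Nonempty X]
    [NoMinOrder X] [NoMaxOrder X] [TopologicalSpace X] [PreconnectedSpace X] [LinearOrder α]
    [TopologicalSpace α] [OrderClosedTopology α] {f : X → α} {a b : α} (hf : StrictMono f)
    (hcont : Continuous f) (hbot : Tendsto f atBot (𝓝 a)) (htop : Tendsto f atTop (𝓝 b)) :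
    range f = Ioo a b := by
  ext c
  constructor
  · rintro ⟨x, rfl⟩
    obtain ⟨x₀, hx₀⟩ := exists_lt x
    obtain ⟨x₁, hx₁⟩ := exists_gt x
    exact ⟨(hf.monotone.le_of_tendsto hbot x₀).trans_lt (hf hx₀),
      (hf hx₁).trans_le (hf.monotone.ge_of_tendsto htop x₁)⟩
  · rintro ⟨hac, hcb⟩
    exact mem_range_of_exists_le_of_exists_ge hcont
      ((hbot.eventually (eventually_lt_nhds hac)).exists.imp fun _ ↦ le_of_lt)
      ((htop.eventually (eventually_gt_nhds hcb)).exists.imp fun _ ↦ le_of_lt)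

noncomputable def sigmoidDiff (α γ s y : ℝ) : ℝ :=
  α * Real.sigmoid y - γ * Real.sigmoid (-y / s)

section sigmoidDiff

variable {α γ s : ℝ}

theorem sigmoidDiff_strictMono (hα : 0 < α) (hγ : 0 < γ) (hs : 0 < s) :
    StrictMono (sigmoidDiff α γ s) := by
  intro a b hab
  have hleft : Real.sigmoid a < Real.sigmoid b := Real.sigmoid_strictMono hab
  have hright : Real.sigmoid (-b / s) < Real.sigmoid (-a / s) :=
    Real.sigmoid_strictMono (div_lt_div_of_pos_right (neg_lt_neg hab) hs)
  unfold sigmoidDiff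
  nlinarith

theorem continuous_sigmoidDiff : Continuous (sigmoidDiff α γ s) := by
  unfold sigmoidDiff
  fun_prop

theorem tendsto_sigmoidDiff_atTop (hs : 0 < s) :
    Tendsto (sigmoidDiff α γ s) atTop (𝓝 α) := by
  have hneg : Tendsto (fun y : ℝ ↦ -y / s) atTop atBot :=
    tendsto_neg_atTop_atBot.atBot_div_const hs
  unfold sigmoidDiff
  simpa using (Real.tendsto_sigmoid_atTop.const_mul α).sub
    ((Real.tendsto_sigmoid_atBot.comp hneg).const_mul γ)

theorem tendsto_sigmoidDiff_atBot (hs : 0 < s) :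
    Tendsto (sigmoidDiff α γ s) atBot (𝓝 (-γ)) := by
  have hneg : Tendsto (fun y : ℝ ↦ -y / s) atBot atTop :=
    tendsto_neg_atBot_atTop.atTop_div_const hs
  unfold sigmoidDiff
  simpa using (Real.tendsto_sigmoid_atBot.const_mul α).sub
    ((Real.tendsto_sigmoid_atTop.comp hneg).const_mul γ)

theorem range_sigmoidDiff (hα : 0 < α) (hγ : 0 < γ) (hs : 0 < s) :
    range (sigmoidDiff α γ s) = Ioo (-γ) α :=
  (sigmoidDiff_strictMono hα hγ hs).range_eq_Ioo_of_tendsto continuous_sigmoidDiff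
    (tendsto_sigmoidDiff_atBot hs) (tendsto_sigmoidDiff_atTop hs)

theorem sigmoidDiff_zero : sigmoidDiff α γ s 0 = (α - γ) / 2 := by
  simp only [sigmoidDiff, neg_zero, zero_div, Real.sigmoid_zero]
  ring

end sigmoidDiff

theorem stmt_0 (α β γ s : ℝ) (hα : 0 < α) (hγ : 0 < γ) (hs : 0 < s) :
    ((∃! y : ℝ, α * sigmoid y = β + γ * sigmoid (-y / s)) ↔ (β < α ∧ 0 < β + γ)) ∧
    (∀ y : ℝ, α * sigmoid y = β + γ * sigmoid (-y / s) →
      (0 < y ↔ α / 2 < β + γ / 2)) := by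
  have hmono := sigmoidDiff_strictMono hα hγ hs
  have hequation : ∀ y, α * sigmoid y = β + γ * sigmoid (-y / s) ↔ sigmoidDiff α γ s y = β := by
    intro y
    rw [sigmoid_eq_real_sigmoid, sigmoidDiff]
    exact sub_eq_iff_eq_add.symm
  simp only [hequation]
  refine ⟨?_, fun y hy ↦ ?_⟩
  · rw [← hmono.injective.mem_range_iff_existsUnique, range_sigmoidDiff hα hγ hs, mem_Ioo]
    constructor <;> rintro ⟨h₁, h₂⟩ <;> constructor <;> linarith
  · rw [← hmono.lt_iff_lt, sigmoidDiff_zero, hy]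
    constructor <;> intro h <;> linarith
end

section
/- Let X be a nonnegative real random variable with E[min{X², 2X}] ≤ r for some r ≥ 0. Then E[X] ≤ r + √r. -/
open MeasureTheory

lemma ptwise_aux (x s : ℝ) (hx : 0 ≤ x) (hs : 0 < s) :
    x ≤ min (x ^ 2) (2 * x) / (2 * s) + min (x ^ 2) (2 * x) / 2 + s / 2 := by
  have h1 : x - min (x ^ 2) (2 * x) / 2 - s / 2 ≤ min (x ^ 2) (2 * x) / (2 * s) := by
    rw [le_div_iff₀ (by positivity : (0:ℝ) < 2 * s)]
    rcases le_total (x ^ 2) (2 * x) with hm | hm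
    · rw [min_eq_left hm]
      nlinarith [sq_nonneg (x - s), mul_nonneg hs.le (sq_nonneg x)]
    · rw [min_eq_right hm]
      nlinarith [mul_nonneg hs.le hx]
  linarith

theorem stmt_5 {Ω : Type*} [MeasurableSpace Ω] (μ : Measure Ω) [IsProbabilityMeasure μ]
    (X : Ω → ℝ) (hXm : Measurable X) (hX0 : ∀ ω, 0 ≤ X ω) (hXint : Integrable X μ)
    (r : ℝ) (hr : 0 ≤ r) (h : ∫ ω, min ((X ω) ^ 2) (2 * X ω) ∂μ ≤ r) :
    ∫ ω, X ω ∂μ ≤ r + Real.sqrt r := by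
  set m : Ω → ℝ := fun ω => min ((X ω) ^ 2) (2 * X ω) with hm_def
  have hm_meas : Measurable m := ((hXm.pow_const 2).min (hXm.const_mul 2))
  have hm_int : Integrable m μ := by
    refine (hXint.const_mul 2).mono hm_meas.aestronglyMeasurable ?_
    filter_upwards with ω
    have h0 : 0 ≤ m ω := le_min (sq_nonneg _) (by linarith [hX0 ω])
    have h1 : m ω ≤ 2 * X ω := min_le_right _ _
    rw [Real.norm_eq_abs, Real.norm_eq_abs, abs_of_nonneg h0,
      abs_of_nonneg (by linarith [hX0 ω] : (0:ℝ) ≤ 2 * X ω)]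
    exact h1
  have key : ∀ s : ℝ, 0 < s → ∫ ω, X ω ∂μ ≤ r / (2 * s) + r / 2 + s / 2 := by
    intro s hs
    have hint : Integrable (fun ω => m ω / (2 * s) + m ω / 2 + s / 2) μ :=
      ((hm_int.div_const _).add (hm_int.div_const _)).add (integrable_const _)
    have hmono : ∫ ω, X ω ∂μ ≤ ∫ ω, (m ω / (2 * s) + m ω / 2 + s / 2) ∂μ := by
      refine integral_mono hXint hint ?_
      intro ω
      exact ptwise_aux (X ω) s (hX0 ω) hs
    have i1 : Integrable (fun ω => m ω / (2 * s)) μ := hm_int.div_const _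
    have i2 : Integrable (fun ω => m ω / 2) μ := hm_int.div_const _
    have i12 : Integrable (fun ω => m ω / (2 * s) + m ω / 2) μ := i1.add i2
    have heq : ∫ ω, (m ω / (2 * s) + m ω / 2 + s / 2) ∂μ
        = (∫ ω, m ω ∂μ) / (2 * s) + (∫ ω, m ω ∂μ) / 2 + s / 2 := by
      rw [integral_add i12 (integrable_const _), integral_add i1 i2,
        integral_div, integral_div, integral_const]
      simp
    rw [heq] at hmono
    have h2s : (0:ℝ) < 2 * s := by positivity
    have b1 : (∫ ω, m ω ∂μ) / (2 * s) ≤ r / (2 * s) := by gcongr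
    have b2 : (∫ ω, m ω ∂μ) / 2 ≤ r / 2 := by gcongr
    linarith
  rcases eq_or_lt_of_le hr with hr0 | hr0
  · -- r = 0
    rw [← hr0]
    simp only [Real.sqrt_zero, add_zero]
    have : ∀ ε : ℝ, 0 < ε → ∫ ω, X ω ∂μ ≤ 0 + ε := by
      intro ε hε
      have := key ε hε
      rw [← hr0] at this
      simp at this
      linarith
    exact le_of_forall_pos_le_add this
  · -- r > 0
    have hsr : 0 < Real.sqrt r := Real.sqrt_pos.mpr hr0
    have := key (Real.sqrt r) hsr
    have hrs : r / (2 * Real.sqrt r) = Real.sqrt r / 2 := by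
      rw [eq_div_iff (by norm_num : (2:ℝ) ≠ 0)]
      field_simp
      nlinarith [Real.sq_sqrt hr]
    rw [hrs] at this
    linarith
end

section
/- Let X be an m×m real matrix and suppose (1/m²)·∑_{i,j} min{X_{ij}², 2|X_{ij}|} ≤ r. Then (1/m²)·∑_{i,j} |X_{ij}| ≤ r + √r. -/
theorem stmt_6 (m : ℕ) (X : Matrix (Fin m) (Fin m) ℝ) (r : ℝ)
    (h : (1 / (m : ℝ) ^ 2) * ∑ i, ∑ j, min ((X i j) ^ 2) (2 * |X i j|) ≤ r) :
    (1 / (m : ℝ) ^ 2) * ∑ i, ∑ j, |X i j| ≤ r + Real.sqrt r := by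
  rcases Nat.eq_zero_or_pos m with hm | hm
  · subst hm
    simp only [Finset.univ_eq_empty, Finset.sum_empty, mul_zero] at h ⊢
    have := Real.sqrt_nonneg r
    linarith
  · have hm2 : (0:ℝ) < (m:ℝ)^2 := by positivity
    set f : Fin m → Fin m → ℝ := fun i j => min |X i j| 1 with hf
    set g : Fin m → Fin m → ℝ := fun i j => min ((X i j)^2) (2 * |X i j|) with hgdef
    have hfg : ∀ i j, (f i j)^2 ≤ g i j := by
      intro i j
      rcases le_or_gt |X i j| 1 with hx | hx
      · have h1 : f i j = |X i j| := min_eq_left hx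
        rw [h1]
        show |X i j|^2 ≤ min ((X i j)^2) (2 * |X i j|)
        have : (X i j)^2 ≤ 2 * |X i j| := by
          rw [← sq_abs]
          nlinarith [abs_nonneg (X i j)]
        rw [min_eq_left this, sq_abs]
      · have h1 : f i j = 1 := min_eq_right hx.le
        rw [h1, one_pow]
        apply le_min
        · nlinarith [sq_abs (X i j)]
        · linarith
    have habs : ∀ i j, |X i j| ≤ g i j + f i j := by
      intro i j
      rcases le_or_gt |X i j| 1 with hx | hx
      · have h1 : f i j = |X i j| := min_eq_left hx
        have h2 : (0:ℝ) ≤ g i j := le_min (by positivity) (by positivity)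
        linarith
      · have h1 : |X i j| ≤ g i j := by
          apply le_min
          · nlinarith [sq_abs (X i j), sq_nonneg (|X i j| - 1)]
          · nlinarith [abs_nonneg (X i j)]
        have h2 : (0:ℝ) ≤ f i j := le_min (abs_nonneg _) zero_le_one
        linarith
    have hg_sum : ∑ i, ∑ j, g i j ≤ (m:ℝ)^2 * r := by
      rw [div_mul_eq_mul_div, one_mul, div_le_iff₀ hm2] at h
      linarith
    have hgr : (0:ℝ) ≤ r := by
      have : (0:ℝ) ≤ ∑ i, ∑ j, g i j :=
        Finset.sum_nonneg fun i _ => Finset.sum_nonneg fun j _ =>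
          le_min (by positivity) (by positivity)
      nlinarith
    -- Cauchy-Schwarz
    have hcs : (∑ i, ∑ j, f i j)^2 ≤ (m:ℝ)^2 * ∑ i, ∑ j, (f i j)^2 := by
      have := sq_sum_le_card_mul_sum_sq (s := (Finset.univ ×ˢ Finset.univ : Finset (Fin m × Fin m)))
        (f := fun p => f p.1 p.2)
      simp only [Finset.sum_product, Finset.card_product, Finset.card_univ, Fintype.card_fin] at this
      calc (∑ i, ∑ j, f i j)^2 ≤ ((m*m : ℕ) : ℝ) * ∑ i, ∑ j, (f i j)^2 := by
            exact_mod_cast this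
        _ = (m:ℝ)^2 * ∑ i, ∑ j, (f i j)^2 := by push_cast; ring
    have hf2g : ∑ i, ∑ j, (f i j)^2 ≤ ∑ i, ∑ j, g i j :=
      Finset.sum_le_sum fun i _ => Finset.sum_le_sum fun j _ => hfg i j
    have hfsum : ∑ i, ∑ j, f i j ≤ (m:ℝ)^2 * Real.sqrt r := by
      have hnn : (0:ℝ) ≤ ∑ i, ∑ j, f i j :=
        Finset.sum_nonneg fun i _ => Finset.sum_nonneg fun j _ =>
          le_min (abs_nonneg _) zero_le_one
      have hsq : (∑ i, ∑ j, f i j)^2 ≤ ((m:ℝ)^2 * Real.sqrt r)^2 := by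
        have h1 : (∑ i, ∑ j, f i j)^2 ≤ (m:ℝ)^2 * ((m:ℝ)^2 * r) := by
          calc (∑ i, ∑ j, f i j)^2 ≤ (m:ℝ)^2 * ∑ i, ∑ j, (f i j)^2 := hcs
            _ ≤ (m:ℝ)^2 * ((m:ℝ)^2 * r) := by
                apply mul_le_mul_of_nonneg_left _ hm2.le
                linarith
        have h2 : ((m:ℝ)^2 * Real.sqrt r)^2 = (m:ℝ)^2 * ((m:ℝ)^2 * r) := by
          rw [mul_pow, Real.sq_sqrt hgr]; ring
        linarith
      nlinarith [Real.sqrt_nonneg r, mul_nonneg hm2.le (Real.sqrt_nonneg r)]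
    have habs_sum : ∑ i, ∑ j, |X i j| ≤ (∑ i, ∑ j, g i j) + ∑ i, ∑ j, f i j := by
      rw [← Finset.sum_add_distrib]
      apply Finset.sum_le_sum
      intro i _
      rw [← Finset.sum_add_distrib]
      exact Finset.sum_le_sum fun j _ => habs i j
    rw [div_mul_eq_mul_div, one_mul, div_le_iff₀ hm2]
    nlinarith
end

section
/- Let X = Π A Π^T where A ∈ ℝ^{d×d} is invertible and Π ∈ ℝ^{n×d} is the assignment matrix of a partition of [n] into nonempty sets B(1),…,B(d) (i.e., Π_{il} = 1 if i ∈ B(l) and 0 otherwise). Then the d-th largest singular value of X satisfies σ_d(X) ≥ σ_d(A) · min_l |B(l)|. -/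
noncomputable def norm2 {k : ℕ} (v : Fin k → ℝ) : ℝ := Real.sqrt (∑ i, (v i) ^ 2)

theorem stmt_10 (n d : ℕ) (hd : 0 < d)
    (A : Matrix (Fin d) (Fin d) ℝ) (hA : IsUnit A.det)
    (B : Fin d → Finset (Fin n))
    (hdisj : ∀ l l', l ≠ l' → Disjoint (B l) (B l'))
    (hcover : ∀ i : Fin n, ∃ l, i ∈ B l)
    (hne : ∀ l, (B l).Nonempty)
    (P : Matrix (Fin n) (Fin d) ℝ)
    (hP : ∀ i l, P i l = if i ∈ B l then (1 : ℝ) else 0)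
    (c : ℝ) (hc : 0 ≤ c)
    (hcA : ∀ v : Fin d → ℝ, c * norm2 v ≤ norm2 (A.mulVec v)) :
    ∃ S : Submodule ℝ (Fin n → ℝ), Module.finrank ℝ S = d ∧
      ∀ v ∈ S,
        (c * (Finset.univ.inf' (Finset.univ_nonempty_iff.mpr ⟨⟨0, hd⟩⟩)
            (fun l => ((B l).card : ℝ)))) * norm2 v
          ≤ norm2 ((P * A * P.transpose).mulVec v) := by
  classical
  set b : Fin d → ℝ := fun l => ((B l).card : ℝ) with hb
  set m : ℝ := Finset.univ.inf' (Finset.univ_nonempty_iff.mpr ⟨⟨0, hd⟩⟩) b with hm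
  have hmb : ∀ l, m ≤ b l := fun l => Finset.inf'_le b (Finset.mem_univ l)
  have h1m : (1 : ℝ) ≤ m :=
    Finset.le_inf' _ _ fun l _ => by
      show (1:ℝ) ≤ ((B l).card : ℝ)
      exact_mod_cast Finset.card_pos.mpr (hne l)
  have hm0 : (0 : ℝ) ≤ m := le_trans zero_le_one h1m
  have hmem_unique : ∀ i l l', i ∈ B l → i ∈ B l' → l = l' := by
    intro i l l' h h'
    by_contra hne'
    exact Finset.disjoint_left.mp (hdisj l l' hne') h h'
  have hPv : ∀ (w : Fin d → ℝ) (i : Fin n) (l : Fin d), i ∈ B l → P.mulVec w i = w l := by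
    intro w i l hl
    simp only [Matrix.mulVec, dotProduct, hP]
    rw [Finset.sum_eq_single l]
    · simp [hl]
    · intro l' _ hne'
      have : i ∉ B l' := fun h => hne' (hmem_unique i l' l h hl)
      simp [this]
    · simp
  have hpart : ∀ f : Fin n → ℝ, ∑ i, f i = ∑ l, ∑ i ∈ B l, f i := by
    intro f
    have huniv : (Finset.univ : Finset (Fin n)) = Finset.univ.biUnion B := by
      ext i; simpa using hcover i
    rw [huniv, Finset.sum_biUnion]
    intro l _ l' _ h
    exact hdisj l l' h
  have hNP : ∀ u : Fin d → ℝ, ∑ i, (P.mulVec u i) ^ 2 = ∑ l, b l * (u l) ^ 2 := by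
    intro u
    rw [hpart]
    refine Finset.sum_congr rfl fun l _ => ?_
    rw [Finset.sum_congr rfl (fun i hi => by rw [hPv u i l hi])]
    simp [hb, Finset.sum_const, nsmul_eq_mul]
  have hPtP : ∀ w : Fin d → ℝ, P.transpose.mulVec (P.mulVec w) = fun l => b l * w l := by
    intro w; funext l
    set y := P.mulVec w with hy
    simp only [Matrix.mulVec, dotProduct, Matrix.transpose_apply, hP]
    have hterm : ∀ i, (if i ∈ B l then (1 : ℝ) else 0) * y i
        = if i ∈ B l then w l else 0 := by
      intro i
      by_cases h : i ∈ B l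
      · simp [h, hy, hPv w i l h]
      · simp [h]
    calc ∑ i, (if i ∈ B l then (1 : ℝ) else 0) * y i
        = ∑ i, (if i ∈ B l then w l else 0) := Finset.sum_congr rfl fun i _ => hterm i
      _ = ∑ i ∈ B l, w l := by rw [Finset.sum_ite_mem]; simp
      _ = b l * w l := by simp [hb, Finset.sum_const, nsmul_eq_mul]
  -- injectivity of mulVecLin P
  have hinj : Function.Injective (Matrix.mulVecLin P) := by
    rw [← LinearMap.ker_eq_bot]
    rw [LinearMap.ker_eq_bot']
    intro w hw
    funext l
    obtain ⟨i, hi⟩ := hne l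
    have := congrFun hw i
    simp only [Matrix.mulVecLin_apply] at this
    rw [hPv w i l hi] at this
    exact this
  refine ⟨LinearMap.range (Matrix.mulVecLin P), ?_, ?_⟩
  · rw [LinearMap.finrank_range_of_inj hinj]
    simp
  · rintro v ⟨w, rfl⟩
    simp only [Matrix.mulVecLin_apply]
    have hcomp : (P * A * P.transpose).mulVec (P.mulVec w)
        = P.mulVec (A.mulVec (fun l => b l * w l)) := by
      rw [← Matrix.mulVec_mulVec, ← Matrix.mulVec_mulVec, hPtP]
    rw [hcomp]
    set u : Fin d → ℝ := A.mulVec (fun l => b l * w l) with hu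
    -- key sqrt facts
    have hNu : ∀ l, m * (u l) ^ 2 ≤ b l * (u l) ^ 2 := fun l =>
      mul_le_mul_of_nonneg_right (hmb l) (sq_nonneg _)
    have h3 : Real.sqrt m * norm2 u ≤ norm2 (P.mulVec u) := by
      rw [norm2, norm2, ← Real.sqrt_mul hm0, hNP]
      rw [Finset.mul_sum]
      exact Real.sqrt_le_sqrt (Finset.sum_le_sum fun l _ => hNu l)
    have h4 : c * norm2 (fun l => b l * w l) ≤ norm2 u := hcA _
    have h5 : Real.sqrt m * norm2 (P.mulVec w) ≤ norm2 (fun l => b l * w l) := by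
      rw [norm2, norm2, ← Real.sqrt_mul hm0, hNP, Finset.mul_sum]
      refine Real.sqrt_le_sqrt (Finset.sum_le_sum fun l _ => ?_)
      have hb0 : 0 ≤ b l := le_trans hm0 (hmb l)
      have : m * (b l * (w l) ^ 2) ≤ b l * (b l * (w l) ^ 2) :=
        mul_le_mul_of_nonneg_right (hmb l) (mul_nonneg hb0 (sq_nonneg _))
      calc m * (b l * (w l) ^ 2) ≤ b l * (b l * (w l) ^ 2) := this
        _ = (b l * w l) ^ 2 := by ring
    have hs0 : (0 : ℝ) ≤ Real.sqrt m := Real.sqrt_nonneg m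
    have hn0 : 0 ≤ norm2 (P.mulVec w) := Real.sqrt_nonneg _
    calc c * m * norm2 (P.mulVec w)
        = Real.sqrt m * (c * (Real.sqrt m * norm2 (P.mulVec w))) := by
          have hss : Real.sqrt m * Real.sqrt m = m := Real.mul_self_sqrt hm0
          linear_combination (-(c * norm2 (P.mulVec w))) * hss
      _ ≤ Real.sqrt m * (c * norm2 (fun l => b l * w l)) := by
          refine mul_le_mul_of_nonneg_left (mul_le_mul_of_nonneg_left h5 hc) hs0
      _ ≤ Real.sqrt m * norm2 u := mul_le_mul_of_nonneg_left h4 hs0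
      _ ≤ norm2 (P.mulVec u) := h3
end

section
/- Suppose U, V ∈ ℝ^{n×d} satisfy UV^T = M for a rank-d matrix M ∈ ℝ^{n×n}, and that U^T U = V^T V. Let M = U_M Σ V_M^T be the singular value decomposition of M. Then there exists an orthogonal matrix Q ∈ O(d) such that V = V_M Σ^{1/2} Q. -/
/-!
Both `U Vᵀ` and `(U_M Σ^{1/2}) (V_M Σ^{1/2})ᵀ` are balanced factorizations of `M`, and for a
balanced factorization `M = U Vᵀ` one has `MᵀM = (V Vᵀ)²`. Uniqueness of positive semidefinite
square roots gives `V Vᵀ = P Pᵀ` with `P = V_M Σ^{1/2}`. Since `P` has the left inverse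
`L = Σ^{-1/2} V_Mᵀ`, the matrix `1 - P L` kills `P Pᵀ = V Vᵀ`, hence kills `V`; so `V = P (L V)`,
and `L V` is orthogonal because `(L V)(L V)ᵀ = L P Pᵀ Lᵀ = 1`.
-/

open Matrix

namespace Matrix

variable {m n 𝕜 : Type*} [Fintype m] [Fintype n]

theorem conjTranspose_mul_self_eq_of_balanced {R : Type*} [CommRing R] [StarRing R]
    {U V : Matrix m n R} (h : Uᴴ * U = Vᴴ * V) :
    (U * Vᴴ)ᴴ * (U * Vᴴ) = V * Vᴴ * (V * Vᴴ) := by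
  rw [conjTranspose_mul, conjTranspose_conjTranspose, Matrix.mul_assoc, ← Matrix.mul_assoc Uᴴ,
    h, Matrix.mul_assoc, Matrix.mul_assoc]

open scoped ComplexOrder

variable [RCLike 𝕜] [DecidableEq m]

theorem PosSemidef.eq_of_mul_self_eq {A B : Matrix m m 𝕜} (hA : A.PosSemidef)
    (hB : B.PosSemidef) (h : A * A = B * B) : A = B := by
  open scoped MatrixOrder Matrix.Norms.L2Operator in
  exact (CFC.sq_eq_sq_iff A B hA.nonneg hB.nonneg).mp (by rw [sq, sq, h])

theorem exists_unitary_eq_mul_of_mul_conjTranspose_eq [DecidableEq n] {V P : Matrix m n 𝕜}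
    {L : Matrix n m 𝕜} (hVP : V * Vᴴ = P * Pᴴ) (hLP : L * P = 1) :
    ∃ Q : Matrix n n 𝕜, Qᴴ * Q = 1 ∧ V = P * Q := by
  have hproj : (1 - P * L) * (V * Vᴴ) = 0 := by
    rw [hVP, Matrix.sub_mul, Matrix.one_mul, Matrix.mul_assoc P, ← Matrix.mul_assoc L, hLP,
      Matrix.one_mul, sub_self]
  rw [mul_self_mul_conjTranspose_eq_zero, Matrix.sub_mul, Matrix.one_mul, sub_eq_zero] at hproj
  refine ⟨L * V, mul_eq_one_comm.mp ?_, by rw [← Matrix.mul_assoc, ← hproj]⟩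
  rw [conjTranspose_mul, ← Matrix.mul_assoc, Matrix.mul_assoc L, hVP, ← Matrix.mul_assoc,
    Matrix.mul_assoc, ← conjTranspose_mul, hLP, conjTranspose_one, Matrix.mul_one]

end Matrix

theorem stmt_11_general (n d : ℕ) (U V UM VM : Matrix (Fin n) (Fin d) ℝ)
    (s : Fin d → ℝ) (hs : ∀ i, 0 < s i)
    (M : Matrix (Fin n) (Fin n) ℝ)
    (hM : M = U * V.transpose)
    (hbal : U.transpose * U = V.transpose * V)
    (hUM : UM.transpose * UM = 1) (hVM : VM.transpose * VM = 1)
    (hSVD : M = UM * Matrix.diagonal s * VM.transpose) :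
    ∃ Q : Matrix (Fin d) (Fin d) ℝ, Q.transpose * Q = 1 ∧
      V = VM * Matrix.diagonal (fun i => Real.sqrt (s i)) * Q := by
  simp only [← conjTranspose_eq_transpose_of_trivial] at hM hbal hUM hVM hSVD ⊢
  set D := diagonal fun i => √(s i)
  have hDD : D * Dᴴ = diagonal s := by
    rw [diagonal_conjTranspose, diagonal_mul_diagonal]
    exact congrArg diagonal (funext fun i => Real.mul_self_sqrt (hs i).le)
  have hDinv : diagonal (fun i => (√(s i))⁻¹) * D = 1 := by
    rw [diagonal_mul_diagonal, ← diagonal_one]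
    exact congrArg diagonal (funext fun i => inv_mul_cancel₀ (Real.sqrt_pos.mpr (hs i)).ne')
  have hM' : M = (UM * D) * (VM * D)ᴴ := by
    rw [hSVD, ← hDD, conjTranspose_mul]
    simp only [Matrix.mul_assoc]
  have hbal' : (UM * D)ᴴ * (UM * D) = (VM * D)ᴴ * (VM * D) := by
    rw [conjTranspose_mul, conjTranspose_mul, Matrix.mul_assoc, Matrix.mul_assoc,
      ← Matrix.mul_assoc UMᴴ, ← Matrix.mul_assoc VMᴴ, hUM, hVM]
  have hsq : V * Vᴴ * (V * Vᴴ) = (VM * D) * (VM * D)ᴴ * ((VM * D) * (VM * D)ᴴ) := by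
    rw [← conjTranspose_mul_self_eq_of_balanced hbal, ← conjTranspose_mul_self_eq_of_balanced hbal',
      ← hM, ← hM']
  have hVV := (posSemidef_self_mul_conjTranspose V).eq_of_mul_self_eq
    (posSemidef_self_mul_conjTranspose _) hsq
  refine exists_unitary_eq_mul_of_mul_conjTranspose_eq hVV
    (L := diagonal (fun i => (√(s i))⁻¹) * VMᴴ) ?_
  rw [Matrix.mul_assoc, ← Matrix.mul_assoc VMᴴ, hVM, Matrix.one_mul, hDinv]

theorem stmt_11 (n d : ℕ) (U V UM VM : Matrix (Fin n) (Fin d) ℝ)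
    (s : Fin d → ℝ) (hs : ∀ i, 0 < s i)
    (M : Matrix (Fin n) (Fin n) ℝ)
    (hM : M = U * V.transpose) (hrank : M.rank = d)
    (hbal : U.transpose * U = V.transpose * V)
    (hUM : UM.transpose * UM = 1) (hVM : VM.transpose * VM = 1)
    (hSVD : M = UM * Matrix.diagonal s * VM.transpose) :
    ∃ Q : Matrix (Fin d) (Fin d) ℝ, Q.transpose * Q = 1 ∧
      V = VM * Matrix.diagonal (fun i => Real.sqrt (s i)) * Q :=
  stmt_11_general n d U V UM VM s hs M hM hbal hUM hVM hSVD
end
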